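/- arXiv:1609.08594 — 2 statements merged into one kernel-verified Lean document; each statement's English description precedes it below -/
import Mathlib

section
/- Let X = ⊕_{i=1}^k M_{n_i,m_i}(ℂ) ⊆ M_{d_B×d_E}(ℂ) (embedded block-diagonally, d_B = Σ_i n_i, d_E = Σ_i m_i) be a block-diagonal TRO and let N be the associated TRO channel. Then N decomposes as a direct sum of partial traces: identifying each block M_{n_i,m_i}(ℂ) with the Hilbert space ℂ^{n_i} ⊗ ℂ^{m_i}, one has N = ⊕_i (id_{n_i} ⊗ tr_{m_i}) on the corresponding block decomposition of inputs; moreover the range of N spans the left algebra L(X) = ⊕_i M_{n_i}(ℂ) and the range of the complementary channel N^E spans the right algebra R(X) = ⊕_i M_{m_i}(ℂ). -/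
/-
The matrix units `e_{ab}` of the diagonal blocks form an orthonormal basis `(e_j)` of
`X = ⊕ᵢ M_{nᵢ,mᵢ}` for the Hilbert–Schmidt inner product. Hence every operator on `X` is
`ρ = ∑ⱼ |ρ eⱼ⟩⟨eⱼ|`, so `N ρ = ∑ⱼ (ρ eⱼ) eⱼᴴ`, whose entries are the partial traces; and
rank-one operators span `B(X)`, so the ranges of `N` and `N^E` are spanned by the `x yᴴ`
and `yᴴ x`, i.e. they are `L(X)` and `R(X)`. Since `e_{ac} = e_{ab} e_{cb}ᴴ` for any column
`b` of the block (there is one as `mᵢ > 0`), `L(X)` is all of `⊕ᵢ M_{nᵢ}`; and `R(X)` is the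
left algebra of `Xᴴ = ⊕ᵢ M_{mᵢ,nᵢ}`.
-/

open scoped BigOperators ComplexOrder Kronecker ENNReal
open Matrix

noncomputable section

namespace TROPaper

/-- The Hilbert–Schmidt inner product `⟨x, y⟩ = tr(xᴴ y)` on matrices. -/
def hsInner {I J : Type*} [Fintype I] [Fintype J] (x y : Matrix I J ℂ) : ℂ :=
  (xᴴ * y).trace

/-- The rank-one operator `|x⟩⟨y|` on a subspace `X` of matrices, with respect to the
Hilbert–Schmidt inner product: `z ↦ ⟨y, z⟩ • x`. -/
def rankOne {I J : Type*} [Fintype I] [Fintype J] (X : Submodule ℂ (Matrix I J ℂ))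
    (x y : X) : X →ₗ[ℂ] X where
  toFun z := hsInner (y : Matrix I J ℂ) (z : Matrix I J ℂ) • x
  map_add' z w := by
    simp only [Submodule.coe_add, hsInner]
    rw [Matrix.mul_add, Matrix.trace_add, add_smul]
  map_smul' c z := by
    simp only [Submodule.coe_smul, hsInner, RingHom.id_apply]
    rw [Matrix.mul_smul, Matrix.trace_smul, smul_eq_mul, ← smul_smul]

/-- A ternary ring of operators: a subspace closed under `x yᴴ z`. -/
def IsTRO {I J : Type*} [Fintype I] [Fintype J] (X : Submodule ℂ (Matrix I J ℂ)) : Prop :=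
  ∀ x ∈ X, ∀ y ∈ X, ∀ z ∈ X, x * yᴴ * z ∈ X

/-- The left algebra `L(X) = span{x yᴴ : x, y ∈ X}`. -/
def leftAlg {I J : Type*} [Fintype I] [Fintype J] (X : Submodule ℂ (Matrix I J ℂ)) :
    Submodule ℂ (Matrix I I ℂ) :=
  Submodule.span ℂ {a | ∃ x ∈ X, ∃ y ∈ X, a = x * yᴴ}

/-- The right algebra `R(X) = span{xᴴ y : x, y ∈ X}`. -/
def rightAlg {I J : Type*} [Fintype I] [Fintype J] (X : Submodule ℂ (Matrix I J ℂ)) :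
    Submodule ℂ (Matrix J J ℂ) :=
  Submodule.span ℂ {a | ∃ x ∈ X, ∃ y ∈ X, a = xᴴ * y}

/-- The normalized trace `τ = tr / dim`. -/
def ntrace {J : Type*} [Fintype J] (f : Matrix J J ℂ) : ℂ :=
  f.trace / (Fintype.card J : ℂ)

/-- A symbol for a TRO `X`: a normalized density strongly independent of the
right algebra `R(X)`. -/
def IsSymbolTRO {I J : Type*} [Fintype I] [Fintype J] [DecidableEq J]
    (X : Submodule ℂ (Matrix I J ℂ)) (f : Matrix J J ℂ) : Prop :=
  f.PosSemidef ∧ ntrace f = 1 ∧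
    ∀ (n : ℕ), ∀ y ∈ rightAlg X, ntrace (f ^ n * y) = ntrace (f ^ n) * ntrace y

/-- Singular values of a square matrix: square roots of eigenvalues of `aᴴ a`. -/
def singularValues {I : Type*} [Fintype I] [DecidableEq I] (a : Matrix I I ℂ) : I → ℝ :=
  fun i => Real.sqrt ((Matrix.posSemidef_conjTranspose_mul_self a).1.eigenvalues i)

/-- The Schatten `p`-norm `(tr |a|^p)^(1/p)` (operator norm for `p = ∞`). -/
def schattenNorm {I : Type*} [Fintype I] [DecidableEq I] (p : ℝ≥0∞) (a : Matrix I I ℂ) : ℝ :=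
  if p = ∞ then ⨆ i, singularValues a i
  else (∑ i, singularValues a i ^ p.toReal) ^ (1 / p.toReal)

/-- The `L_p`-norm `(τ(|f|^p))^(1/p)` with respect to the normalized trace `τ = tr/dim`. -/
def schattenNormTau {J : Type*} [Fintype J] [DecidableEq J] (p : ℝ≥0∞) (f : Matrix J J ℂ) : ℝ :=
  if p = ∞ then ⨆ i, singularValues f i
  else ((∑ i, singularValues f i ^ p.toReal) / (Fintype.card J : ℝ)) ^ (1 / p.toReal)

/-- Real power of a hermitian matrix via the spectral decomposition; for negative exponents
this is the power of the inverse on the support (since `0 ^ r = 0` for `r ≠ 0`).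
Junk value `0` for non-hermitian input. -/
def herPow {I : Type*} [Fintype I] [DecidableEq I] (σ : Matrix I I ℂ) (r : ℝ) :
    Matrix I I ℂ :=
  if h : σ.IsHermitian then
    (h.eigenvectorUnitary : Matrix I I ℂ) *
      Matrix.diagonal (fun i => ((h.eigenvalues i ^ r : ℝ) : ℂ)) *
      (star (h.eigenvectorUnitary : Matrix I I ℂ))
  else 0

/-- The conjugate exponent `p' = (1 - 1/p)⁻¹` of `p`, as a real number. -/
def econj (p : ℝ≥0∞) : ℝ := ((1 - p⁻¹)⁻¹ : ℝ≥0∞).toReal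

/-- Partial trace over the right (second) tensor factor. -/
def trRight {A B : Type*} [Fintype A] [Fintype B] :
    Matrix (A × B) (A × B) ℂ →ₗ[ℂ] Matrix A A ℂ where
  toFun M := Matrix.of fun a a' => ∑ b, M (a, b) (a', b)
  map_add' M N := by
    funext a a'
    simp [Finset.sum_add_distrib]
  map_smul' c M := by
    funext a a'
    simp [Finset.mul_sum]

/-- Partial trace over the left (first) tensor factor. -/
def trLeft {A B : Type*} [Fintype A] [Fintype B] :
    Matrix (A × B) (A × B) ℂ →ₗ[ℂ] Matrix B B ℂ where
  toFun M := Matrix.of fun b b' => ∑ a, M (a, b) (a, b')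
  map_add' M N := by
    funext b b'
    simp [Finset.sum_add_distrib]
  map_smul' c M := by
    funext b b'
    simp [Finset.mul_sum]

/-- Conjugation `ρ ↦ V ρ Vᴴ`. -/
def dilate {A P : Type*} [Fintype A] [Fintype P] (V : Matrix P A ℂ) :
    Matrix A A ℂ →ₗ[ℂ] Matrix P P ℂ where
  toFun ρ := V * ρ * Vᴴ
  map_add' ρ σ := by simp [Matrix.mul_add, Matrix.add_mul]
  map_smul' c ρ := by simp [Matrix.mul_smul, Matrix.smul_mul]

/-- The modified channel `N_f(ρ) = tr_E((1 ⊗ f) V ρ Vᴴ)` associated to a Stinespring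
isometry `V : ℂ^A → ℂ^B ⊗ ℂ^E` and an operator `f` on the environment `E`; it satisfies
`N_f(|h⟩⟨k|) = h f kᴴ` on the matrices `h, k` corresponding to `V|h⟩, V|k⟩`.
For `f = 1` this is the channel `N(ρ) = tr_E(V ρ Vᴴ)` itself. -/
def modChannel {A B E : Type*} [Fintype A] [Fintype B] [Fintype E] [DecidableEq B]
    (V : Matrix (B × E) A ℂ) (f : Matrix E E ℂ) :
    Matrix A A ℂ →ₗ[ℂ] Matrix B B ℂ :=
  trRight ∘ₗ LinearMap.mulLeft ℂ ((1 : Matrix B B ℂ) ⊗ₖ fᵀ) ∘ₗ dilate V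

/-- The matrix in `M_{B×E}` corresponding to the vector `V|h⟩ ∈ ℂ^B ⊗ ℂ^E`. -/
def toMat {A B E : Type*} [Fintype A] [Fintype B] [Fintype E] (V : Matrix (B × E) A ℂ) :
    (A → ℂ) →ₗ[ℂ] Matrix B E ℂ where
  toFun h := Matrix.of fun b e => V.mulVec h (b, e)
  map_add' h k := by
    funext b e
    simp [Matrix.mulVec_add]
  map_smul' c h := by
    funext b e
    simp [Matrix.mulVec_smul]

/-- The Stinespring space of `V`: the matrices corresponding to vectors in the range of `V`. -/
def stinespringSpace {A B E : Type*} [Fintype A] [Fintype B] [Fintype E]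
    (V : Matrix (B × E) A ℂ) : Submodule ℂ (Matrix B E ℂ) :=
  LinearMap.range (toMat V)

/-- A symbol of the channel with Stinespring isometry `V`: a normalized density `f` on the
environment that is strongly independent of the right algebra of some TRO containing the
Stinespring space. -/
def IsSymbol {A B E : Type*} [Fintype A] [Fintype B] [Fintype E] [DecidableEq E]
    (V : Matrix (B × E) A ℂ) (f : Matrix E E ℂ) : Prop :=
  f.PosSemidef ∧ ntrace f = 1 ∧
    ∃ X : Submodule ℂ (Matrix B E ℂ), IsTRO X ∧ stinespringSpace V ≤ X ∧
      ∀ (n : ℕ), ∀ y ∈ rightAlg X, ntrace (f ^ n * y) = ntrace (f ^ n) * ntrace y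

/-- Ampliation `id_C ⊗ Φ` of a linear map on matrix algebras. -/
def ampl (C : Type*) {A B : Type*} [Fintype C] [Fintype A] [Fintype B]
    (Φ : Matrix A A ℂ →ₗ[ℂ] Matrix B B ℂ) :
    Matrix (C × A) (C × A) ℂ →ₗ[ℂ] Matrix (C × B) (C × B) ℂ where
  toFun ρ := Matrix.of fun p q => Φ (Matrix.of fun a a' => ρ (p.1, a) (q.1, a')) p.2 q.2
  map_add' ρ σ := by
    funext p q
    have h : (Matrix.of fun a a' => (ρ + σ) (p.1, a) (q.1, a')) =
        (Matrix.of fun a a' => ρ (p.1, a) (q.1, a')) +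
          (Matrix.of fun a a' => σ (p.1, a) (q.1, a')) := rfl
    show Φ _ p.2 q.2 = _
    rw [h, map_add]
    rfl
  map_smul' c ρ := by
    funext p q
    have h : (Matrix.of fun a a' => (c • ρ) (p.1, a) (q.1, a')) =
        c • (Matrix.of fun a a' => ρ (p.1, a) (q.1, a')) := rfl
    show Φ _ p.2 q.2 = _
    rw [h, LinearMap.map_smul]
    rfl

/-- A state: positive semidefinite with trace one. -/
def IsState {I : Type*} [Fintype I] (ρ : Matrix I I ℂ) : Prop :=
  ρ.PosSemidef ∧ ρ.trace = 1

/-- Complete positivity of a map between matrix algebras. -/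
def CompletelyPositive {A B : Type*} [Fintype A] [Fintype B]
    (Φ : Matrix A A ℂ →ₗ[ℂ] Matrix B B ℂ) : Prop :=
  ∀ (d : ℕ) (ρ : Matrix (Fin d × A) (Fin d × A) ℂ), ρ.PosSemidef → (ampl (Fin d) Φ ρ).PosSemidef

/-- Trace preservation. -/
def TracePreserving {A B : Type*} [Fintype A] [Fintype B]
    (Φ : Matrix A A ℂ →ₗ[ℂ] Matrix B B ℂ) : Prop :=
  ∀ ρ, (Φ ρ).trace = ρ.trace

/-- A quantum channel: a completely positive trace-preserving map. -/
def IsQuantumChannel {A B : Type*} [Fintype A] [Fintype B]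
    (Φ : Matrix A A ℂ →ₗ[ℂ] Matrix B B ℂ) : Prop :=
  CompletelyPositive Φ ∧ TracePreserving Φ

/-- The von Neumann entropy `H(ρ) = -tr(ρ log ρ)` (natural logarithm), computed through the
eigenvalues; junk value `0` for non-hermitian input. -/
def vnEntropy {I : Type*} [Fintype I] [DecidableEq I] (ρ : Matrix I I ℂ) : ℝ :=
  if h : ρ.IsHermitian then -∑ i, h.eigenvalues i * Real.log (h.eigenvalues i) else 0

/-- Coherent information of a bipartite state `ω` on `A ⊗ B`:
`I_c(A⟩B)_ω = H(ω^{AB}) - H(ω^B)`. -/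
def coherentInfo {A B : Type*} [Fintype A] [Fintype B] [DecidableEq A] [DecidableEq B]
    (ω : Matrix (A × B) (A × B) ℂ) : ℝ :=
  vnEntropy ω - vnEntropy (trLeft ω)

/-- Mutual information of a bipartite state `ω` on `A ⊗ B`:
`I(A:B)_ω = H(ω^A) + H(ω^B) - H(ω^{AB})`. -/
def mutualInfo {A B : Type*} [Fintype A] [Fintype B] [DecidableEq A] [DecidableEq B]
    (ω : Matrix (A × B) (A × B) ℂ) : ℝ :=
  vnEntropy (trRight ω) + vnEntropy (trLeft ω) - vnEntropy ω

/-- `τ(f log f)` with respect to the normalized trace `τ = tr/dim` (natural logarithm). -/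
def tauLog {J : Type*} [Fintype J] [DecidableEq J] (f : Matrix J J ℂ) : ℝ :=
  if h : f.IsHermitian then
    (∑ i, h.eigenvalues i * Real.log (h.eigenvalues i)) / (Fintype.card J : ℝ)
  else 0

/-- One-shot quantum capacity: the supremum of coherent informations of outputs of
`id_A ⊗ Φ` over all finite-dimensional ancillas `A` and bipartite input states. -/
def Q1 {A B : Type*} [Fintype A] [Fintype B] [DecidableEq B]
    (Φ : Matrix A A ℂ →ₗ[ℂ] Matrix B B ℂ) : ℝ :=
  sSup {r | ∃ (d : ℕ) (ρ : Matrix (Fin d × A) (Fin d × A) ℂ), IsState ρ ∧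
    r = coherentInfo (ampl (Fin d) Φ ρ)}

/-- The Holevo quantity `χ(Φ)`: the supremum over finite ensembles of
`H(Φ(Σ p_x ρ_x)) - Σ p_x H(Φ(ρ_x))`. -/
def holevoChi {A B : Type*} [Fintype A] [Fintype B] [DecidableEq B]
    (Φ : Matrix A A ℂ →ₗ[ℂ] Matrix B B ℂ) : ℝ :=
  sSup {r | ∃ (k : ℕ) (pr : Fin k → ℝ) (ρs : Fin k → Matrix A A ℂ),
    (∀ x, 0 ≤ pr x) ∧ (∑ x, pr x = 1) ∧ (∀ x, IsState (ρs x)) ∧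
    r = vnEntropy (Φ (∑ x, (pr x : ℂ) • ρs x)) - ∑ x, pr x * vnEntropy (Φ (ρs x))}

/-- Entanglement-assisted classical capacity: supremum of mutual informations of outputs. -/
def CEA {A B : Type*} [Fintype A] [Fintype B] [DecidableEq A] [DecidableEq B]
    (Φ : Matrix A A ℂ →ₗ[ℂ] Matrix B B ℂ) : ℝ :=
  sSup {r | ∃ (d : ℕ) (ρ : Matrix (Fin d × A) (Fin d × A) ℂ), IsState ρ ∧
    r = mutualInfo (ampl (Fin d) Φ ρ)}

/-- Tensor product `Φ ⊗ Ψ` of linear maps between matrix algebras. -/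
def tensorMap {A A' B B' : Type*} [Fintype A] [Fintype A'] [Fintype B] [Fintype B']
    [DecidableEq A] [DecidableEq A']
    (Φ : Matrix A A ℂ →ₗ[ℂ] Matrix B B ℂ) (Ψ : Matrix A' A' ℂ →ₗ[ℂ] Matrix B' B' ℂ) :
    Matrix (A × A') (A × A') ℂ →ₗ[ℂ] Matrix (B × B') (B × B') ℂ where
  toFun ρ := Matrix.of fun p q =>
    ∑ t : (A × A) × (A' × A'),
      ρ (t.1.1, t.2.1) (t.1.2, t.2.2) *
        (Φ (Matrix.single t.1.1 t.1.2 1) p.1 q.1 *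
          Ψ (Matrix.single t.2.1 t.2.2 1) p.2 q.2)
  map_add' ρ σ := by
    funext p q
    simp [Matrix.add_apply, add_mul, Finset.sum_add_distrib]
  map_smul' c ρ := by
    funext p q
    simp [Matrix.smul_apply, smul_eq_mul, Finset.mul_sum, mul_assoc]

/-- `k`-fold tensor power `Φ^{⊗k}` of a linear map between matrix algebras. -/
def tensorPow {A B : Type*} [Fintype A] [Fintype B] [DecidableEq A]
    (Φ : Matrix A A ℂ →ₗ[ℂ] Matrix B B ℂ) (k : ℕ) :
    Matrix (Fin k → A) (Fin k → A) ℂ →ₗ[ℂ] Matrix (Fin k → B) (Fin k → B) ℂ where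
  toFun ρ := Matrix.of fun p q =>
    ∑ t : (Fin k → A) × (Fin k → A),
      ρ t.1 t.2 * ∏ i, Φ (Matrix.single (t.1 i) (t.2 i) 1) (p i) (q i)
  map_add' ρ σ := by
    funext p q
    simp [Matrix.add_apply, add_mul, Finset.sum_add_distrib]
  map_smul' c ρ := by
    funext p q
    simp [Matrix.smul_apply, smul_eq_mul, Finset.mul_sum, mul_assoc]

/-- Quantum capacity `Q(Φ) = lim_k Q^{(1)}(Φ^{⊗k})/k`. -/
def qCap {A B : Type*} [Fintype A] [Fintype B] [DecidableEq A] [DecidableEq B]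
    (Φ : Matrix A A ℂ →ₗ[ℂ] Matrix B B ℂ) : ℝ :=
  Filter.limUnder Filter.atTop (fun k : ℕ => Q1 (tensorPow Φ k) / k)

/-- The norm `‖ω‖_{S_1(B, S_p(A))}`: the infimum over states `σ` on `B` of
`‖(1_A ⊗ σ^{-1/(2p')}) ω (1_A ⊗ σ^{-1/(2p')})‖_p`. -/
def S1SpNorm {A B : Type*} [Fintype A] [Fintype B] [DecidableEq A] [DecidableEq B]
    (p : ℝ≥0∞) (ω : Matrix (A × B) (A × B) ℂ) : ℝ :=
  sInf {r | ∃ σ : Matrix B B ℂ, IsState σ ∧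
    r = schattenNorm p
      (((1 : Matrix A A ℂ) ⊗ₖ herPow σ (-(1 / (2 * econj p)))) * ω *
        ((1 : Matrix A A ℂ) ⊗ₖ herPow σ (-(1 / (2 * econj p)))))}

/-- The sandwiched Rényi coherent information `I_{c,p}(A⟩B)_ω = p' log ‖ω‖_{S_1(B,S_p(A))}`. -/
def renyiCoherentInfo {A B : Type*} [Fintype A] [Fintype B] [DecidableEq A] [DecidableEq B]
    (p : ℝ≥0∞) (ω : Matrix (A × B) (A × B) ℂ) : ℝ :=
  econj p * Real.log (S1SpNorm p ω)

/-- Positivity of an operator on a subspace of matrices with the HS inner product. -/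
def IsPosOpX {I J : Type*} [Fintype I] [Fintype J] {X : Submodule ℂ (Matrix I J ℂ)}
    (T : X →ₗ[ℂ] X) : Prop :=
  ∀ v : X, 0 ≤ hsInner (v : Matrix I J ℂ) ((T v : X) : Matrix I J ℂ)


/-- The block-diagonal subspace of matrices indexed by sigma types: entries vanish off
the diagonal blocks.  For rectangular blocks this is the TRO `⊕_i M_{n_i, m_i}`. -/
def blockDiag {k : ℕ} (n m : Fin k → ℕ) :
    Submodule ℂ (Matrix (Σ i, Fin (n i)) (Σ i, Fin (m i)) ℂ) where
  carrier := {x | ∀ u v, u.1 ≠ v.1 → x u v = 0}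
  add_mem' := by
    intro a b ha hb u v h
    simp [Matrix.add_apply, ha u v h, hb u v h]
  zero_mem' := by intro u v h; rfl
  smul_mem' := by
    intro c x hx u v h
    simp [Matrix.smul_apply, hx u v h]

/-- The canonical matrix unit `e_{ab}` of the `i`-th diagonal block, as an element of the
block-diagonal TRO. -/
def basElt {k : ℕ} (n m : Fin k → ℕ) (i : Fin k) (a : Fin (n i)) (b : Fin (m i)) :
    blockDiag n m :=
  ⟨Matrix.single ⟨i, a⟩ ⟨i, b⟩ 1, by
    intro u v huv
    by_cases h : (⟨i, a⟩ : Σ j, Fin (n j)) = u ∧ (⟨i, b⟩ : Σ j, Fin (m j)) = v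
    · exact absurd (by rw [← h.1, ← h.2]) huv
    · simp [Matrix.single, h]⟩

/-- entry-reading vector of a matrix, under `ℂ^B ⊗ ℂ^E ≅ M_{B×E}`. -/
def vecE {B E : Type*} (x : Matrix B E ℂ) : B × E → ℂ := fun p => x p.1 p.2

/-- Inner product on tuples of elements of a subspace of matrices. -/
def pInner {I J C : Type*} [Fintype I] [Fintype J] [Fintype C]
    {X : Submodule ℂ (Matrix I J ℂ)} (v w : C → X) : ℂ :=
  ∑ c, hsInner ((v c : X) : Matrix I J ℂ) ((w c : X) : Matrix I J ℂ)

/-- Ampliation `id_C ⊗ Φ` of a map defined on operators on a subspace `X` of matrices. -/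
def amplX {I J B : Type*} [Fintype I] [Fintype J] [Fintype B]
    {X : Submodule ℂ (Matrix I J ℂ)} (C : Type*) [Fintype C] [DecidableEq C]
    (Φ : (X →ₗ[ℂ] X) →ₗ[ℂ] Matrix B B ℂ) :
    ((C → X) →ₗ[ℂ] (C → X)) →ₗ[ℂ] Matrix (C × B) (C × B) ℂ where
  toFun T := Matrix.of fun p q =>
    Φ (LinearMap.proj p.1 ∘ₗ T ∘ₗ LinearMap.single ℂ (fun _ : C => X) q.1) p.2 q.2
  map_add' T S := by
    funext p q
    have h : (LinearMap.proj p.1 ∘ₗ (T + S) ∘ₗ LinearMap.single ℂ (fun _ : C => X) q.1 :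
          X →ₗ[ℂ] X)
        = LinearMap.proj p.1 ∘ₗ T ∘ₗ LinearMap.single ℂ (fun _ : C => X) q.1
          + LinearMap.proj p.1 ∘ₗ S ∘ₗ LinearMap.single ℂ (fun _ : C => X) q.1 := by
      ext z; rfl
    show Φ _ p.2 q.2 = _
    rw [h, map_add]; rfl
  map_smul' c T := by
    funext p q
    have h : (LinearMap.proj p.1 ∘ₗ (c • T) ∘ₗ LinearMap.single ℂ (fun _ : C => X) q.1 :
          X →ₗ[ℂ] X)
        = c • (LinearMap.proj p.1 ∘ₗ T ∘ₗ LinearMap.single ℂ (fun _ : C => X) q.1) := by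
      ext z; rfl
    show Φ _ p.2 q.2 = _
    rw [h, LinearMap.map_smul]; rfl

/-- The direct sum of partial traces `⊕_i (id_{n_i} ⊗ tr_{m_i})`. -/
def sumPartialTraces {k : ℕ} (n m : Fin k → ℕ) :
    Matrix (Σ i, Fin (n i) × Fin (m i)) (Σ i, Fin (n i) × Fin (m i)) ℂ →ₗ[ℂ]
      Matrix (Σ i, Fin (n i)) (Σ i, Fin (n i)) ℂ where
  toFun ρ := Matrix.of fun u v =>
    if h : u.1 = v.1 then
      ∑ b : Fin (m u.1), ρ ⟨u.1, (u.2, b)⟩ ⟨v.1, (v.2, Fin.cast (congrArg m h) b)⟩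
    else 0
  map_add' ρ σ := by
    funext u v
    simp only [Matrix.of_apply, Matrix.add_apply]
    by_cases h : u.1 = v.1
    · rw [dif_pos h, dif_pos h, dif_pos h, Finset.sum_add_distrib]
    · rw [dif_neg h, dif_neg h, dif_neg h, add_zero]
  map_smul' c ρ := by
    funext u v
    simp only [Matrix.of_apply, Matrix.smul_apply, smul_eq_mul, RingHom.id_apply]
    by_cases h : u.1 = v.1
    · rw [dif_pos h, dif_pos h, Finset.mul_sum]
    · rw [dif_neg h, dif_neg h, mul_zero]

/-- Random unitary channel `ρ ↦ Σ_g q(g) u(g) ρ u(g)ᴴ`. -/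
def randUnitary {G : Type*} [Fintype G] {H : Type*} [Fintype H]
    (u : G → Matrix H H ℂ) (q : G → ℝ) :
    Matrix H H ℂ →ₗ[ℂ] Matrix H H ℂ where
  toFun ρ := ∑ g, (q g : ℂ) • (u g * ρ * (u g)ᴴ)
  map_add' ρ σ := by
    simp [Matrix.mul_add, Matrix.add_mul, smul_add, Finset.sum_add_distrib]
  map_smul' c ρ := by
    simp only [RingHom.id_apply]
    rw [Finset.smul_sum]
    refine Finset.sum_congr rfl fun g _ => ?_
    rw [Matrix.mul_smul, Matrix.smul_mul, smul_smul, smul_smul, mul_comm]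

/-- The negative cb-entropy `-S_cb(Φ)`: the supremum over pure bipartite inputs of
`H(ω^A) - H(ω^{AB})`. -/
def negScb {A B : Type*} [Fintype A] [Fintype B] [DecidableEq A] [DecidableEq B]
    (Φ : Matrix A A ℂ →ₗ[ℂ] Matrix B B ℂ) : ℝ :=
  sSup {r | ∃ v : A × A → ℂ, (∑ p, Complex.normSq (v p)) = 1 ∧
    r = vnEntropy (trRight (ampl A Φ (Matrix.vecMulVec v (star v)))) -
        vnEntropy (ampl A Φ (Matrix.vecMulVec v (star v)))}

/-- The unit vector of the maximally entangled state `(1/√m) Σ_i |ii⟩`. -/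
def maxEntVec (m : ℕ) : Fin m × Fin m → ℂ :=
  fun ij => if ij.1 = ij.2 then (1 / Real.sqrt m : ℝ) else 0

@[simp]
theorem rankOne_apply {I J : Type*} [Fintype I] [Fintype J] (X : Submodule ℂ (Matrix I J ℂ))
    (x y z : X) : rankOne X x y z = hsInner (y : Matrix I J ℂ) z • x :=
  rfl

theorem hsInner_single_left {I J : Type*} [Fintype I] [Fintype J] [DecidableEq I]
    [DecidableEq J] (u : I) (v : J) (M : Matrix I J ℂ) :
    hsInner (Matrix.single u v 1) M = M u v := by
  rw [hsInner, conjTranspose_single, star_one, trace_single_mul, one_smul]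

section ParsevalFrame

variable {I J ι : Type*} [Fintype I] [Fintype J] [Fintype ι]
  {X : Submodule ℂ (Matrix I J ℂ)} {b : ι → X}

theorem sum_rankOne_map_eq (hb : ∀ z : X, ∑ j, hsInner (b j : Matrix I J ℂ) z • b j = z)
    (T : X →ₗ[ℂ] X) : ∑ j, rankOne X (T (b j)) (b j) = T := by
  ext z : 1
  conv_rhs => rw [← hb z]
  simp only [LinearMap.sum_apply, rankOne_apply, map_sum, map_smul]

theorem span_rankOne_eq_top (hb : ∀ z : X, ∑ j, hsInner (b j : Matrix I J ℂ) z • b j = z) :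
    Submodule.span ℂ {T | ∃ x y, T = rankOne X x y} = ⊤ := by
  refine eq_top_iff.mpr fun T _ => ?_
  rw [← sum_rankOne_map_eq hb T]
  exact Submodule.sum_mem _ fun j _ => Submodule.subset_span ⟨_, _, rfl⟩

theorem map_eq_sum_mul_conjTranspose
    (hb : ∀ z : X, ∑ j, hsInner (b j : Matrix I J ℂ) z • b j = z)
    (N : (X →ₗ[ℂ] X) →ₗ[ℂ] Matrix I I ℂ)
    (hN : ∀ x y : X, N (rankOne X x y) = (x : Matrix I J ℂ) * (y : Matrix I J ℂ)ᴴ)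
    (ρ : X →ₗ[ℂ] X) : N ρ = ∑ j, (ρ (b j) : Matrix I J ℂ) * (b j : Matrix I J ℂ)ᴴ := by
  rw [← sum_rankOne_map_eq hb ρ, map_sum]
  simp only [hN, sum_rankOne_map_eq hb ρ]

theorem range_eq_leftAlg (hb : ∀ z : X, ∑ j, hsInner (b j : Matrix I J ℂ) z • b j = z)
    (N : (X →ₗ[ℂ] X) →ₗ[ℂ] Matrix I I ℂ)
    (hN : ∀ x y : X, N (rankOne X x y) = (x : Matrix I J ℂ) * (y : Matrix I J ℂ)ᴴ) :
    LinearMap.range N = leftAlg X := by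
  apply le_antisymm
  · rw [LinearMap.range_eq_map, ← span_rankOne_eq_top hb, Submodule.map_span_le]
    rintro _ ⟨x, y, rfl⟩
    rw [hN]
    exact Submodule.subset_span ⟨x, x.2, y, y.2, rfl⟩
  · rw [leftAlg, Submodule.span_le]
    rintro _ ⟨x, hx, y, hy, rfl⟩
    exact ⟨rankOne X ⟨x, hx⟩ ⟨y, hy⟩, hN _ _⟩

theorem range_eq_rightAlg (hb : ∀ z : X, ∑ j, hsInner (b j : Matrix I J ℂ) z • b j = z)
    (NE : (X →ₗ[ℂ] X) →ₗ[ℂ] Matrix J J ℂ)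
    (hNE : ∀ x y : X, NE (rankOne X x y) = (y : Matrix I J ℂ)ᴴ * (x : Matrix I J ℂ)) :
    LinearMap.range NE = rightAlg X := by
  apply le_antisymm
  · rw [LinearMap.range_eq_map, ← span_rankOne_eq_top hb, Submodule.map_span_le]
    rintro _ ⟨x, y, rfl⟩
    rw [hNE]
    exact Submodule.subset_span ⟨y, y.2, x, x.2, rfl⟩
  · rw [rightAlg, Submodule.span_le]
    rintro _ ⟨x, hx, y, hy, rfl⟩
    exact ⟨rankOne X ⟨y, hy⟩ ⟨x, hx⟩, hNE _ _⟩

end ParsevalFrame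

section BlockDiagonal

variable {k : ℕ}

theorem mul_mem_blockDiag {n p m : Fin k → ℕ} {x : Matrix (Σ i, Fin (n i)) (Σ i, Fin (p i)) ℂ}
    {y : Matrix (Σ i, Fin (p i)) (Σ i, Fin (m i)) ℂ} (hx : x ∈ blockDiag n p)
    (hy : y ∈ blockDiag p m) : x * y ∈ blockDiag n m := by
  intro u v huv
  rw [mul_apply]
  refine Finset.sum_eq_zero fun w _ => ?_
  by_cases huw : u.1 = w.1
  · rw [hy w v (huw ▸ huv), mul_zero]
  · rw [hx u w huw, zero_mul]

theorem conjTranspose_mem_blockDiag {n m : Fin k → ℕ}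
    {x : Matrix (Σ i, Fin (n i)) (Σ i, Fin (m i)) ℂ} (hx : x ∈ blockDiag n m) :
    xᴴ ∈ blockDiag m n := by
  intro u v huv
  rw [conjTranspose_apply, hx v u (Ne.symm huv), star_zero]

theorem isTRO_blockDiag (n m : Fin k → ℕ) : IsTRO (blockDiag n m) :=
  fun _ hx _ hy _ hz =>
    mul_mem_blockDiag (mul_mem_blockDiag hx (conjTranspose_mem_blockDiag hy)) hz

@[simp]
theorem coe_basElt (n m : Fin k → ℕ) (i : Fin k) (a : Fin (n i)) (b : Fin (m i)) :
    (basElt n m i a b : Matrix (Σ j, Fin (n j)) (Σ j, Fin (m j)) ℂ) = single ⟨i, a⟩ ⟨i, b⟩ 1 :=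
  rfl

theorem sum_hsInner_basElt_smul (n m : Fin k → ℕ) (z : blockDiag n m) :
    ∑ α : Σ i, Fin (n i) × Fin (m i),
      hsInner (basElt n m α.1 α.2.1 α.2.2 : Matrix (Σ i, Fin (n i)) (Σ i, Fin (m i)) ℂ) z •
        basElt n m α.1 α.2.1 α.2.2 = z := by
  apply Subtype.ext
  ext ⟨i, a⟩ ⟨j, c⟩
  simp only [coe_basElt, hsInner_single_left, Submodule.coe_sum, Submodule.coe_smul,
    Matrix.sum_apply, Matrix.smul_apply, Matrix.single_apply, Fintype.sum_sigma,
    Fintype.sum_prod_type]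
  by_cases hij : i = j
  · subst hij
    rw [Finset.sum_eq_single i (fun x _ hx => by simp [hx]) (by simp)]
    simp [ite_and]
  · rw [z.2 ⟨i, a⟩ ⟨j, c⟩ hij]
    exact Finset.sum_eq_zero fun x _ => Finset.sum_eq_zero fun _ _ => Finset.sum_eq_zero
      fun _ _ => by
        rw [if_neg (by rintro ⟨h₁, h₂⟩; cases h₁; cases h₂; exact hij rfl), smul_zero]

theorem leftAlg_blockDiag (n : Fin k → ℕ) {m : Fin k → ℕ} (hm : ∀ i, 0 < m i) :
    leftAlg (blockDiag n m) = blockDiag n n := by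
  apply le_antisymm
  · rw [leftAlg, Submodule.span_le]
    rintro _ ⟨x, hx, y, hy, rfl⟩
    exact mul_mem_blockDiag hx (conjTranspose_mem_blockDiag hy)
  · intro M hM
    change ((⟨M, hM⟩ : blockDiag n n) : Matrix (Σ i, Fin (n i)) (Σ i, Fin (n i)) ℂ) ∈ _
    rw [← sum_hsInner_basElt_smul n n ⟨M, hM⟩, Submodule.coe_sum]
    refine Submodule.sum_mem _ fun ⟨i, a, c⟩ _ =>
      Submodule.smul_mem _ _ (Submodule.subset_span ?_)
    let b : Fin (m i) := ⟨0, hm i⟩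
    exact ⟨_, (basElt n m i a b).2, _, (basElt n m i c b).2, by simp⟩

theorem rightAlg_blockDiag_eq_leftAlg (n m : Fin k → ℕ) :
    rightAlg (blockDiag n m) = leftAlg (blockDiag m n) := by
  rw [rightAlg, leftAlg]
  congr 1
  ext a
  constructor
  · rintro ⟨x, hx, y, hy, rfl⟩
    exact ⟨xᴴ, conjTranspose_mem_blockDiag hx, yᴴ, conjTranspose_mem_blockDiag hy,
      by rw [conjTranspose_conjTranspose]⟩
  · rintro ⟨x, hx, y, hy, rfl⟩
    exact ⟨xᴴ, conjTranspose_mem_blockDiag hx, yᴴ, conjTranspose_mem_blockDiag hy,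
      by rw [conjTranspose_conjTranspose]⟩

theorem rightAlg_blockDiag {n : Fin k → ℕ} (hn : ∀ i, 0 < n i) (m : Fin k → ℕ) :
    rightAlg (blockDiag n m) = blockDiag m m := by
  rw [rightAlg_blockDiag_eq_leftAlg, leftAlg_blockDiag m hn]

theorem apply_blockDiag_eq_sum_hsInner (n m : Fin k → ℕ)
    (N : (blockDiag n m →ₗ[ℂ] blockDiag n m) →ₗ[ℂ] Matrix (Σ i, Fin (n i)) (Σ i, Fin (n i)) ℂ)
    (hN : ∀ x y : blockDiag n m, N (rankOne (blockDiag n m) x y) =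
      (x : Matrix (Σ i, Fin (n i)) (Σ i, Fin (m i)) ℂ) * (y : Matrix _ (Σ i, Fin (m i)) ℂ)ᴴ)
    (ρ : blockDiag n m →ₗ[ℂ] blockDiag n m) (i : Fin k) (a c : Fin (n i)) :
    N ρ ⟨i, a⟩ ⟨i, c⟩ = ∑ b : Fin (m i),
      hsInner (basElt n m i a b : Matrix (Σ j, Fin (n j)) (Σ j, Fin (m j)) ℂ)
        (ρ (basElt n m i c b) : Matrix (Σ j, Fin (n j)) (Σ j, Fin (m j)) ℂ) := by
  rw [map_eq_sum_mul_conjTranspose (sum_hsInner_basElt_smul n m) N hN ρ, Matrix.sum_apply,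
    Fintype.sum_sigma, Finset.sum_eq_single i, Fintype.sum_prod_type, Finset.sum_eq_single c]
  · simp [hsInner_single_left]
  · intro c' _ hc'
    refine Finset.sum_eq_zero fun b _ => ?_
    simp only [coe_basElt, conjTranspose_single, star_one]
    exact mul_single_apply_of_ne (hbj := by simpa using Ne.symm hc') ..
  · simp
  · rintro j _ hj
    refine Finset.sum_eq_zero fun _ _ => ?_
    simp only [coe_basElt, conjTranspose_single, star_one]
    exact mul_single_apply_of_ne (hbj := fun h => hj (congrArg Sigma.fst h).symm) ..
  · simp

end BlockDiagonal

/-- The channel associated to the block-diagonal TRO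
`X = ⊕_i M_{n_i,m_i}` is the direct sum of partial traces `⊕_i (id_{n_i} ⊗ tr_{m_i})`
(it vanishes off the diagonal blocks and acts as `id ⊗ tr` on each block, with the
`i`-th block of the input operator read off through the matrix units `basElt n m i a b`);
moreover the range of `N` spans the left algebra `L(X) = ⊕_i M_{n_i}` and the range of the
complementary channel `N^E` spans the right algebra `R(X) = ⊕_i M_{m_i}`. -/
theorem stmt0 {k : ℕ} (n m : Fin k → ℕ) (hn : ∀ i, 0 < n i) (hm : ∀ i, 0 < m i)
    (N : ((blockDiag n m) →ₗ[ℂ] (blockDiag n m)) →ₗ[ℂ]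
      Matrix (Σ i, Fin (n i)) (Σ i, Fin (n i)) ℂ)
    (NE : ((blockDiag n m) →ₗ[ℂ] (blockDiag n m)) →ₗ[ℂ]
      Matrix (Σ i, Fin (m i)) (Σ i, Fin (m i)) ℂ)
    (hN : ∀ x y : blockDiag n m,
      N (rankOne (blockDiag n m) x y) = (x : Matrix (Σ i, Fin (n i)) (Σ i, Fin (m i)) ℂ) * (y : Matrix (Σ i, Fin (n i)) (Σ i, Fin (m i)) ℂ)ᴴ)
    (hNE : ∀ x y : blockDiag n m,
      NE (rankOne (blockDiag n m) x y) = (y : Matrix (Σ i, Fin (n i)) (Σ i, Fin (m i)) ℂ)ᴴ * (x : Matrix (Σ i, Fin (n i)) (Σ i, Fin (m i)) ℂ)) :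
    IsTRO (blockDiag n m) ∧
    (∀ (ρ : (blockDiag n m) →ₗ[ℂ] (blockDiag n m)) (u v : Σ i, Fin (n i)),
      u.1 ≠ v.1 → N ρ u v = 0) ∧
    (∀ (ρ : (blockDiag n m) →ₗ[ℂ] (blockDiag n m)) (i : Fin k) (a c : Fin (n i)),
      N ρ ⟨i, a⟩ ⟨i, c⟩ =
        ∑ b : Fin (m i),
          hsInner ((basElt n m i a b : blockDiag n m) : Matrix (Σ j, Fin (n j)) (Σ j, Fin (m j)) ℂ)
            ((ρ (basElt n m i c b) : blockDiag n m) : Matrix (Σ j, Fin (n j)) (Σ j, Fin (m j)) ℂ)) ∧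
    LinearMap.range N = leftAlg (blockDiag n m) ∧
    leftAlg (blockDiag n m) = blockDiag n n ∧
    LinearMap.range NE = rightAlg (blockDiag n m) ∧
    rightAlg (blockDiag n m) = blockDiag m m := by
  have hb := sum_hsInner_basElt_smul n m
  have hrange := range_eq_leftAlg hb N hN
  refine ⟨isTRO_blockDiag n m, fun ρ u v huv => ?_, apply_blockDiag_eq_sum_hsInner n m N hN,
    hrange, leftAlg_blockDiag n hm, range_eq_rightAlg hb NE hNE, rightAlg_blockDiag hn m⟩
  have hρ : N ρ ∈ blockDiag n n := leftAlg_blockDiag n hm ▸ hrange ▸ LinearMap.mem_range_self N ρ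
  exact hρ u v huv

end TROPaper
end
end

section
/- Let N : M_{d_A}(ℂ) → M_{d_B}(ℂ) and M : M_{d_{A′}}(ℂ) → M_{d_{B′}}(ℂ) be quantum channels, let f be a symbol of N (with environment dimension d_E) and g a symbol of M (with environment dimension d_{E′}). Then f ⊗ g ∈ M_{d_E}(ℂ) ⊗ M_{d_{E′}}(ℂ) is a symbol of the tensor product channel N ⊗ M, and (N ⊗ M)_{f⊗g} = N_f ⊗ M_g. In particular, the identity matrix 1 is always a symbol of M and (N ⊗ M)_{f⊗1} = N_f ⊗ M. -/
open scoped BigOperators ComplexOrder Kronecker ENNReal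
open Matrix

noncomputable section

namespace TROPaper

open Kronecker in
lemma kron_conjT {B E B' E' : Type*} (x : Matrix B E ℂ) (y : Matrix B' E' ℂ) :
    (x ⊗ₖ y)ᴴ = xᴴ ⊗ₖ yᴴ := by
  ext ⟨e, e'⟩ ⟨b, b'⟩
  simp [Matrix.conjTranspose_apply, star_mul']

open Kronecker in
lemma kron_pow {E E' : Type*} [Fintype E] [Fintype E'] [DecidableEq E] [DecidableEq E']
    (f : Matrix E E ℂ) (g : Matrix E' E' ℂ) (n : ℕ) :
    (f ⊗ₖ g) ^ n = (f ^ n) ⊗ₖ (g ^ n) := by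
  induction n with
  | zero => simp [Matrix.one_kronecker_one]
  | succ n ih => rw [pow_succ, pow_succ, pow_succ, ih, Matrix.mul_kronecker_mul]

open Kronecker in
lemma ntrace_kron {E E' : Type*} [Fintype E] [Fintype E']
    (x : Matrix E E ℂ) (y : Matrix E' E' ℂ) :
    ntrace (x ⊗ₖ y) = ntrace x * ntrace y := by
  simp only [ntrace, Matrix.trace_kronecker, Fintype.card_prod, Nat.cast_mul]
  rw [div_mul_div_comm]
open Kronecker in
lemma modChannel_apply {A B E : Type*} [Fintype A] [Fintype B] [Fintype E] [DecidableEq B]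
    (V : Matrix (B × E) A ℂ) (f : Matrix E E ℂ) (ρ : Matrix A A ℂ) (b b' : B) :
    modChannel V f ρ b b' =
      ∑ e : E, ∑ e' : E, ∑ a : A, ∑ a' : A,
        f e' e * (V (b, e') a * (ρ a a' * star (V (b', e) a'))) := by
  have hT : ∀ M : Matrix (B × E) (B × E) ℂ, trRight M b b' = ∑ e, M (b, e) (b', e) :=
    fun M => rfl
  simp only [modChannel, LinearMap.coe_comp, Function.comp_apply, hT,
    LinearMap.coe_mk, AddHom.coe_mk, LinearMap.mulLeft_apply, dilate, Matrix.of_apply,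
    Matrix.mul_apply, Matrix.conjTranspose_apply, Fintype.sum_prod_type,
    Matrix.kroneckerMap_apply, Matrix.one_apply, Matrix.transpose_apply, ite_mul, one_mul,
    zero_mul, Finset.sum_ite_irrel, Finset.sum_const_zero, Finset.sum_ite_eq, Finset.mem_univ, if_true, Finset.sum_mul, Finset.mul_sum]
  refine Finset.sum_congr rfl fun e _ => Finset.sum_congr rfl fun e' _ => ?_
  rw [Finset.sum_comm]
  exact Finset.sum_congr rfl fun a _ => Finset.sum_congr rfl fun a' _ => by ring
lemma modChannel_single {A B E : Type*} [Fintype A] [Fintype B] [Fintype E] [DecidableEq B]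
    [DecidableEq A]
    (V : Matrix (B × E) A ℂ) (f : Matrix E E ℂ) (a a' : A) (b b' : B) :
    modChannel V f (Matrix.single a a' 1) b b' =
      ∑ e : E, ∑ e' : E, f e' e * (V (b, e') a * star (V (b', e) a')) := by
  rw [modChannel_apply]
  refine Finset.sum_congr rfl fun e _ => Finset.sum_congr rfl fun e' _ => ?_
  simp [Matrix.single, ite_mul, ite_and, Finset.sum_ite_irrel, Finset.sum_const_zero,
    Finset.sum_ite_eq, Finset.sum_ite_eq', mul_ite, mul_zero, mul_one]
lemma sum_comm4 {M : Type*} [AddCommMonoid M] {α β γ δ : Type*}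
    [Fintype α] [Fintype β] [Fintype γ] [Fintype δ] (h : α → β → γ → δ → M) :
    ∑ a, ∑ b, ∑ c, ∑ d, h a b c d = ∑ b, ∑ d, ∑ a, ∑ c, h a b c d :=
  calc ∑ a, ∑ b, ∑ c, ∑ d, h a b c d
      = ∑ b, ∑ a, ∑ c, ∑ d, h a b c d := Finset.sum_comm
    _ = ∑ b, ∑ a, ∑ d, ∑ c, h a b c d :=
        Finset.sum_congr rfl fun b _ => Finset.sum_congr rfl fun a _ => Finset.sum_comm
    _ = ∑ b, ∑ d, ∑ a, ∑ c, h a b c d :=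
        Finset.sum_congr rfl fun b _ => Finset.sum_comm

open Kronecker in
lemma modChannel_kron {dA dB dE dA' dB' dE' : ℕ}
    (V : Matrix (Fin dB × Fin dE) (Fin dA) ℂ)
    (W : Matrix (Fin dB' × Fin dE') (Fin dA') ℂ)
    (f : Matrix (Fin dE) (Fin dE) ℂ) (g : Matrix (Fin dE') (Fin dE') ℂ) :
    modChannel
        (Matrix.reindex (Equiv.prodProdProdComm (Fin dB) (Fin dE) (Fin dB') (Fin dE'))
          (Equiv.refl (Fin dA × Fin dA')) (V ⊗ₖ W)) (f ⊗ₖ g)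
      = tensorMap (modChannel V f) (modChannel W g) := by
  apply Module.Basis.ext (Matrix.stdBasis ℂ (Fin dA × Fin dA') (Fin dA × Fin dA'))
  rintro ⟨⟨a1, a1'⟩, ⟨a2, a2'⟩⟩
  rw [Matrix.stdBasis_eq_single]
  ext ⟨b, b'⟩ ⟨c, c'⟩
  rw [modChannel_single]
  show _ = ∑ t : ((Fin dA × Fin dA) × (Fin dA' × Fin dA')),
      Matrix.single (a1, a1') (a2, a2') 1 (t.1.1, t.2.1) (t.1.2, t.2.2) *
        (modChannel V f (Matrix.single t.1.1 t.1.2 1) b c *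
          modChannel W g (Matrix.single t.2.1 t.2.2 1) b' c')
  simp only [modChannel_single]
  simp only [Matrix.single, Matrix.of_apply, Prod.mk.injEq,
    ite_and, ite_mul, one_mul, zero_mul, Fintype.sum_prod_type, Finset.sum_ite_irrel,
    Finset.sum_const_zero, Finset.sum_ite_eq, Finset.sum_ite_eq', Finset.mem_univ, if_true]
  simp only [Matrix.reindex_apply, Matrix.submatrix_apply, Equiv.prodProdProdComm_symm,
    Equiv.prodProdProdComm_apply, Equiv.refl_symm, Equiv.coe_refl, id_eq,
    Matrix.kroneckerMap_apply, star_mul']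
  simp only [Finset.sum_mul, Finset.mul_sum]
  rw [sum_comm4]
  exact Finset.sum_congr rfl fun e1 _ => Finset.sum_congr rfl fun e2 _ =>
    Finset.sum_congr rfl fun e3 _ => Finset.sum_congr rfl fun e4 _ => by ring
lemma ntrace_add {J : Type*} [Fintype J] (x y : Matrix J J ℂ) :
    ntrace (x + y) = ntrace x + ntrace y := by
  simp [ntrace, Matrix.trace_add, add_div]

lemma ntrace_smul {J : Type*} [Fintype J] (c : ℂ) (x : Matrix J J ℂ) :
    ntrace (c • x) = c * ntrace x := by
  simp [ntrace, Matrix.trace_smul, smul_eq_mul, mul_div_assoc]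

lemma ntrace_zero {J : Type*} [Fintype J] : ntrace (0 : Matrix J J ℂ) = 0 := by
  simp [ntrace]

lemma isSymbol_one {A B E : Type*} [Fintype A] [Fintype B] [Fintype E] [DecidableEq E]
    (W : Matrix (B × E) A ℂ) (hE : (Fintype.card E : ℂ) ≠ 0) :
    IsSymbol W (1 : Matrix E E ℂ) := by
  refine ⟨Matrix.PosSemidef.one, ?_, ⊤, fun x _ y _ z _ => Submodule.mem_top, le_top,
    fun n y _ => ?_⟩
  · simp [ntrace, Matrix.trace_one, div_self hE]
  · simp [one_pow, one_mul, ntrace, Matrix.trace_one, div_self hE]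

lemma card_ne_zero_of_ntrace_eq_one {E : Type*} [Fintype E] {g : Matrix E E ℂ}
    (hg : ntrace g = 1) : (Fintype.card E : ℂ) ≠ 0 := by
  intro h
  rw [ntrace, h, div_zero] at hg
  exact one_ne_zero hg.symm

open Kronecker in
lemma posSemidef_kron {E E' : Type*} [Fintype E] [Fintype E'] [DecidableEq E] [DecidableEq E']
    {f : Matrix E E ℂ} {g : Matrix E' E' ℂ} (hf : f.PosSemidef) (hg : g.PosSemidef) :
    (f ⊗ₖ g).PosSemidef := by
  exact hf.kronecker hg
/-- The submodule of matrices `y` with `τ(F y) = c τ(y)`. -/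
def traceCond {J : Type*} [Fintype J] (F : Matrix J J ℂ) (c : ℂ) :
    Submodule ℂ (Matrix J J ℂ) where
  carrier := {y | ntrace (F * y) = c * ntrace y}
  add_mem' := by
    intro a b ha hb
    simp only [Set.mem_setOf_eq] at *
    rw [Matrix.mul_add, ntrace_add, ntrace_add, ha, hb, mul_add]
  zero_mem' := by simp [Set.mem_setOf_eq, ntrace_zero]
  smul_mem' := by
    intro c x hx
    simp only [Set.mem_setOf_eq] at *
    rw [Matrix.mul_smul, ntrace_smul, ntrace_smul, hx]
    ring

open Kronecker in
lemma isSymbol_kron {dA dB dE dA' dB' dE' : ℕ}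
    (V : Matrix (Fin dB × Fin dE) (Fin dA) ℂ)
    (W : Matrix (Fin dB' × Fin dE') (Fin dA') ℂ)
    {f : Matrix (Fin dE) (Fin dE) ℂ} {g : Matrix (Fin dE') (Fin dE') ℂ}
    (hf : IsSymbol V f) (hg : IsSymbol W g) :
    IsSymbol
      (Matrix.reindex (Equiv.prodProdProdComm (Fin dB) (Fin dE) (Fin dB') (Fin dE'))
        (Equiv.refl (Fin dA × Fin dA')) (V ⊗ₖ W)) (f ⊗ₖ g) := by
  obtain ⟨hf1, hf2, X1, hX1t, hX1le, hX1i⟩ := hf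
  obtain ⟨hg1, hg2, X2, hX2t, hX2le, hX2i⟩ := hg
  set gens : Set (Matrix (Fin dB × Fin dB') (Fin dE × Fin dE') ℂ) :=
    {z | ∃ x ∈ X1, ∃ y ∈ X2, z = x ⊗ₖ y} with hgens
  refine ⟨posSemidef_kron hf1 hg1, by rw [ntrace_kron, hf2, hg2, mul_one],
    Submodule.span ℂ gens, ?_, ?_, ?_⟩
  · -- TRO
    intro u hu
    induction hu using Submodule.span_induction with
    | mem x hx =>
      intro v hv
      induction hv using Submodule.span_induction with
      | mem x' hx' =>
        intro w hw
        induction hw using Submodule.span_induction with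
        | mem x'' hx'' =>
          obtain ⟨p1, hp1, q1, hq1, rfl⟩ := hx
          obtain ⟨p2, hp2, q2, hq2, rfl⟩ := hx'
          obtain ⟨p3, hp3, q3, hq3, rfl⟩ := hx''
          rw [kron_conjT, ← Matrix.mul_kronecker_mul, ← Matrix.mul_kronecker_mul]
          exact Submodule.subset_span
            ⟨_, hX1t _ hp1 _ hp2 _ hp3, _, hX2t _ hq1 _ hq2 _ hq3, rfl⟩
        | zero => rw [Matrix.mul_zero]; exact Submodule.zero_mem _
        | add w1 w2 h1 h2 ih1 ih2 =>
          rw [Matrix.mul_add]; exact Submodule.add_mem _ ih1 ih2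
        | smul a w hw ih =>
          rw [Matrix.mul_smul]; exact Submodule.smul_mem _ _ ih
      | zero =>
        intro w hw
        rw [Matrix.conjTranspose_zero, Matrix.mul_zero, Matrix.zero_mul]
        exact Submodule.zero_mem _
      | add v1 v2 h1 h2 ih1 ih2 =>
        intro w hw
        rw [Matrix.conjTranspose_add, Matrix.mul_add, Matrix.add_mul]
        exact Submodule.add_mem _ (ih1 w hw) (ih2 w hw)
      | smul a v hv ih =>
        intro w hw
        rw [Matrix.conjTranspose_smul, Matrix.mul_smul, Matrix.smul_mul]
        exact Submodule.smul_mem _ _ (ih w hw)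
    | zero =>
      intro v hv w hw
      rw [Matrix.zero_mul, Matrix.zero_mul]
      exact Submodule.zero_mem _
    | add u1 u2 h1 h2 ih1 ih2 =>
      intro v hv w hw
      rw [Matrix.add_mul, Matrix.add_mul]
      exact Submodule.add_mem _ (ih1 v hv w hw) (ih2 v hv w hw)
    | smul a u hu ih =>
      intro v hv w hw
      rw [Matrix.smul_mul, Matrix.smul_mul]
      exact Submodule.smul_mem _ _ (ih v hv w hw)
  · -- contains the Stinespring space
    rintro z ⟨h, rfl⟩
    rw [pi_eq_sum_univ h]
    rw [map_sum]
    simp only [LinearMap.map_smul]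
    refine Submodule.sum_mem _ fun p _ => Submodule.smul_mem _ _ (Submodule.subset_span ?_)
    refine ⟨toMat V (fun j => if p.1 = j then 1 else 0), hX1le ⟨_, rfl⟩,
      toMat W (fun j => if p.2 = j then 1 else 0), hX2le ⟨_, rfl⟩, ?_⟩
    ext ⟨b, b'⟩ ⟨e, e'⟩
    obtain ⟨a, a'⟩ := p
    simp [toMat, Matrix.mulVec, dotProduct, Matrix.reindex_apply,
      Matrix.submatrix_apply, Equiv.prodProdProdComm_symm, Equiv.prodProdProdComm_apply,
      Matrix.kroneckerMap_apply, mul_ite, mul_zero, mul_one, ite_and, Prod.ext_iff,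
      Finset.sum_ite_irrel, Finset.sum_const_zero, Finset.sum_ite_eq, Finset.sum_ite_eq',
      Fintype.sum_prod_type]
  · -- strong independence
    intro n y hy
    suffices hS : rightAlg (Submodule.span ℂ gens) ≤
        traceCond ((f ⊗ₖ g) ^ n) (ntrace ((f ⊗ₖ g) ^ n)) from hS hy
    refine Submodule.span_le.mpr ?_
    rintro z ⟨u, hu, v, hv, rfl⟩
    revert v
    induction hu using Submodule.span_induction with
    | mem x hx =>
      intro v hv
      induction hv using Submodule.span_induction with
      | mem x' hx' =>
        obtain ⟨x1, hx1, y1, hy1, rfl⟩ := hx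
        obtain ⟨x2, hx2, y2, hy2, rfl⟩ := hx'
        show ntrace _ = _
        rw [kron_conjT, ← Matrix.mul_kronecker_mul, kron_pow, ← Matrix.mul_kronecker_mul,
          ntrace_kron, ntrace_kron, ntrace_kron,
          hX1i n _ (Submodule.subset_span ⟨x1, hx1, x2, hx2, rfl⟩),
          hX2i n _ (Submodule.subset_span ⟨y1, hy1, y2, hy2, rfl⟩)]
        ring
      | zero =>
        rw [Matrix.mul_zero]
        exact Submodule.zero_mem _
      | add v1 v2 h1 h2 ih1 ih2 =>
        rw [Matrix.mul_add]
        exact Submodule.add_mem _ ih1 ih2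
      | smul a v hv ih =>
        rw [Matrix.mul_smul]
        exact Submodule.smul_mem _ _ ih
    | zero =>
      intro v hv
      rw [Matrix.conjTranspose_zero, Matrix.zero_mul]
      exact Submodule.zero_mem _
    | add u1 u2 h1 h2 ih1 ih2 =>
      intro v hv
      rw [Matrix.conjTranspose_add, Matrix.add_mul]
      exact Submodule.add_mem _ (ih1 v hv) (ih2 v hv)
    | smul a u hu ih =>
      intro v hv
      rw [Matrix.conjTranspose_smul, Matrix.smul_mul]
      exact Submodule.smul_mem _ _ (ih v hv)

/-- If `f` is a symbol of `N` and `g` is a symbol of `M`, then `f ⊗ g` is a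
symbol of `N ⊗ M` (whose Stinespring isometry is `V ⊗ W` up to reshuffling of tensor
factors) and `(N ⊗ M)_{f⊗g} = N_f ⊗ M_g`; in particular `1` is always a symbol of `M` and
`(N ⊗ M)_{f⊗1} = N_f ⊗ M`. -/
theorem stmt6 {dA dB dE dA' dB' dE' : ℕ}
    (V : Matrix (Fin dB × Fin dE) (Fin dA) ℂ) (hV : Vᴴ * V = 1)
    (W : Matrix (Fin dB' × Fin dE') (Fin dA') ℂ) (hW : Wᴴ * W = 1)
    (f : Matrix (Fin dE) (Fin dE) ℂ) (hf : IsSymbol V f)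
    (g : Matrix (Fin dE') (Fin dE') ℂ) (hg : IsSymbol W g) :
    IsSymbol
      (Matrix.reindex (Equiv.prodProdProdComm (Fin dB) (Fin dE) (Fin dB') (Fin dE'))
        (Equiv.refl (Fin dA × Fin dA')) (V ⊗ₖ W)) (f ⊗ₖ g) ∧
    modChannel
        (Matrix.reindex (Equiv.prodProdProdComm (Fin dB) (Fin dE) (Fin dB') (Fin dE'))
          (Equiv.refl (Fin dA × Fin dA')) (V ⊗ₖ W)) (f ⊗ₖ g)
      = tensorMap (modChannel V f) (modChannel W g) ∧
    IsSymbol W (1 : Matrix (Fin dE') (Fin dE') ℂ) ∧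
    modChannel
        (Matrix.reindex (Equiv.prodProdProdComm (Fin dB) (Fin dE) (Fin dB') (Fin dE'))
          (Equiv.refl (Fin dA × Fin dA')) (V ⊗ₖ W))
        (f ⊗ₖ (1 : Matrix (Fin dE') (Fin dE') ℂ))
      = tensorMap (modChannel V f) (modChannel W 1) := by
  exact ⟨isSymbol_kron V W hf hg, modChannel_kron V W f g,
    isSymbol_one W (card_ne_zero_of_ntrace_eq_one hg.2.1), modChannel_kron V W f 1⟩

end TROPaper
end
end
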